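/- For the PIE iterates x, the per-step changes vanish in the limit: the sequence n ↦ ‖x (n+1) − x n‖ tends to 0 as n → ∞. Consequently, for every δ > 0 there exists N such that ‖x (n+1) − x n‖ < δ for all n ≥ N. -/

import Mathlib

/-!
The step `x (n+1) - x n = rⁿ • (r - 1) • x₀ + c • rⁿ⁺¹ • e (n+1)` of the iterates, with `r = √α₀`,
is a geometrically decaying multiple of `x₀` plus a geometrically decaying scalar times the bounded
noise, so it tends to `0` whenever `‖r‖ < 1`.
-/

open Finset Filter Topology

section

variable {𝕜 V : Type*} [NormedField 𝕜] [NormedAddCommGroup V] [NormedSpace 𝕜 V]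

def pieIterate (r c : 𝕜) (x₀ : V) (e : ℕ → V) (N : ℕ) : V :=
  r ^ N • x₀ + c • ∑ i ∈ Icc 1 N, r ^ i • e i

theorem pieIterate_succ_sub (r c : 𝕜) (x₀ : V) (e : ℕ → V) (n : ℕ) :
    pieIterate r c x₀ e (n + 1) - pieIterate r c x₀ e n
      = r ^ n • (r - 1) • x₀ + c • r ^ (n + 1) • e (n + 1) := by
  rw [pieIterate, pieIterate, sum_Icc_succ_top (Nat.le_add_left 1 n), pow_succ]
  module

theorem tendsto_pieIterate_succ_sub {r : 𝕜} (hr : ‖r‖ < 1) (c : 𝕜) (x₀ : V) {e : ℕ → V}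
    {C : ℝ} (he : ∀ᶠ n in atTop, ‖e n‖ ≤ C) :
    Tendsto (fun n ↦ pieIterate r c x₀ e (n + 1) - pieIterate r c x₀ e n) atTop (𝓝 0) := by
  have hpow : Tendsto (fun n : ℕ ↦ r ^ n) atTop (𝓝 0) :=
    tendsto_pow_atTop_nhds_zero_of_norm_lt_one hr
  have hdrift : Tendsto (fun n : ℕ ↦ r ^ n • (r - 1) • x₀) atTop (𝓝 0) := by
    simpa using hpow.smul_const ((r - 1) • x₀)
  have hnoise : Tendsto (fun n : ℕ ↦ c • r ^ (n + 1) • e (n + 1)) atTop (𝓝 0) := by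
    have hbdd : IsBoundedUnder (· ≤ ·) atTop (fun n ↦ ‖e (n + 1)‖) :=
      isBoundedUnder_of_eventually_le ((tendsto_add_atTop_nat 1).eventually he)
    simpa using
      ((hpow.comp (tendsto_add_atTop_nat 1)).zero_smul_isBoundedUnder_le hbdd).const_smul c
  simpa [pieIterate_succ_sub] using hdrift.add hnoise

end

open Finset Filter in
theorem pie_step_diff_tendsto_zero_general {V : Type*} [NormedAddCommGroup V] [NormedSpace ℝ V]
    (α₀ lam : ℝ) (hα₀' : α₀ < 1)
    (x₀ : V) (e : ℕ → V) (x : ℕ → V)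
    (hx : ∀ N : ℕ, x N = (Real.sqrt α₀) ^ N • x₀
        + lam • ∑ i ∈ Finset.Icc 1 N, (Real.sqrt α₀) ^ i • e i)
    (C₂ : ℝ) (he : ∀ n : ℕ, 1 ≤ n → ‖e n‖ ≤ C₂) :
    Filter.Tendsto (fun n : ℕ => ‖x (n + 1) - x n‖) Filter.atTop (nhds 0) ∧
      ∀ δ : ℝ, 0 < δ → ∃ N : ℕ, ∀ n : ℕ, N ≤ n → ‖x (n + 1) - x n‖ < δ := by
  have hx' : x = pieIterate (Real.sqrt α₀) lam x₀ e := funext hx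
  have hr : ‖Real.sqrt α₀‖ < 1 := by
    rwa [Real.norm_of_nonneg (Real.sqrt_nonneg _), Real.sqrt_lt' one_pos, one_pow]
  have hsteps : Tendsto (fun n ↦ ‖x (n + 1) - x n‖) atTop (𝓝 0) := by
    rw [hx']
    simpa using (tendsto_pieIterate_succ_sub hr lam x₀ (eventually_atTop.2 ⟨1, he⟩)).norm
  exact ⟨hsteps, fun δ hδ ↦ eventually_atTop.1 ((tendsto_order.1 hsteps).2 δ hδ)⟩

open Finset Filter in
/-- The per-step changes of the PIE iterates vanish in the limit. -/
theorem pie_step_diff_tendsto_zero {V : Type*} [NormedAddCommGroup V] [NormedSpace ℝ V]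
    (α₀ lam : ℝ) (hα₀ : 0 < α₀) (hα₀' : α₀ < 1) (hlam : 0 ≤ lam)
    (x₀ : V) (e : ℕ → V) (x : ℕ → V)
    (hx : ∀ N : ℕ, x N = (Real.sqrt α₀) ^ N • x₀
        + lam • ∑ i ∈ Finset.Icc 1 N, (Real.sqrt α₀) ^ i • e i)
    (C₁ C₂ : ℝ) (hC₁ : 0 ≤ C₁) (hC₂ : 0 ≤ C₂)
    (hx₀ : ‖x₀‖ ≤ C₁) (he : ∀ n : ℕ, 1 ≤ n → ‖e n‖ ≤ C₂) :
    Filter.Tendsto (fun n : ℕ => ‖x (n + 1) - x n‖) Filter.atTop (nhds 0) ∧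
      ∀ δ : ℝ, 0 < δ → ∃ N : ℕ, ∀ n : ℕ, N ≤ n → ‖x (n + 1) - x n‖ < δ :=
  pie_step_diff_tendsto_zero_general α₀ lam hα₀' x₀ e x hx C₂ he
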